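/- Let G be a finite simple graph with vertex set V, let 0 < φ ≤ 1/12, and let A ⊆ B ⊆ V be vertex sets satisfying |∂A| ≤ φ·Vol(V∖A), Vol(B) ≤ (1+φ)·Vol(A), Vol(A) ≤ (5/6)·Vol(V), and Vol(B) > Vol(V)/2. Then |∂B| ≤ 12φ·Vol(V∖B); in particular, if B ≠ V then the conductance of the cut B satisfies Φ(B) ≤ 12φ. -/

import Mathlib

open Finset

/-- The volume of a vertex set: the sum of the degrees (in `G`) of its vertices. -/
def gvol {V : Type*} [Fintype V] (G : SimpleGraph V) [DecidableRel G.Adj]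
    (S : Finset V) : ℕ :=
  ∑ v ∈ S, G.degree v

/-- The number of edges of `G` with one endpoint in `S` and the other in `T`
(for disjoint `S`, `T`, counted as ordered pairs `(s, t) ∈ S × T` with `s ~ t`). -/
def gcut {V : Type*} [Fintype V] [DecidableEq V] (G : SimpleGraph V) [DecidableRel G.Adj]
    (S T : Finset V) : ℕ :=
  ((S ×ˢ T).filter fun p => G.Adj p.1 p.2).card

/-!
Every edge leaving `B` either leaves `A` or starts in `B ∖ A`, so
`|∂B| ≤ |∂A| + Vol(B ∖ A) ≤ φ·Vol(V ∖ A) + φ·Vol(A) = φ·Vol(V)`.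
On the other hand `Vol(B) ≤ (13/12)·(5/6)·Vol(V)`, so `Vol(V) ≤ 12·Vol(V ∖ B)`.
Since `Vol(B) > Vol(V)/2`, the smaller side of the cut `B` is `V ∖ B`.
-/

section

variable {V : Type*} [Fintype V] [DecidableEq V] (G : SimpleGraph V) [DecidableRel G.Adj]

theorem gvol_add_gvol_compl (S : Finset V) : gvol G S + gvol G Sᶜ = gvol G univ :=
  sum_add_sum_compl S _

theorem gvol_sdiff_add_gvol {A B : Finset V} (hAB : A ⊆ B) :
    gvol G (B \ A) + gvol G A = gvol G B :=
  sum_sdiff hAB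

theorem gcut_eq_sum (S T : Finset V) :
    gcut G S T = ∑ v ∈ S, (T.filter (G.Adj v)).card := by
  rw [gcut, card_filter, sum_product]
  exact sum_congr rfl fun v _ => (card_filter _ _).symm

theorem gcut_le_gvol (S T : Finset V) : gcut G S T ≤ gvol G S := by
  rw [gcut_eq_sum, gvol]
  refine sum_le_sum fun v _ => ?_
  rw [← SimpleGraph.card_neighborFinset_eq_degree, SimpleGraph.neighborFinset_eq_filter]
  exact card_le_card (filter_subset_filter _ (subset_univ T))

theorem gcut_mono_right (S : Finset V) {T T' : Finset V} (h : T ⊆ T') :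
    gcut G S T ≤ gcut G S T' :=
  card_le_card (filter_subset_filter _ (product_subset_product_right h))

theorem gcut_union_left_le (S S' T : Finset V) :
    gcut G (S ∪ S') T ≤ gcut G S T + gcut G S' T := by
  rw [gcut, union_product, filter_union]
  exact card_union_le _ _

theorem gcut_compl_le_of_subset {A B : Finset V} (hAB : A ⊆ B) :
    gcut G B Bᶜ ≤ gcut G A Aᶜ + gvol G (B \ A) :=
  calc gcut G B Bᶜ = gcut G (A ∪ B \ A) Bᶜ := by rw [union_sdiff_of_subset hAB]
    _ ≤ gcut G A Bᶜ + gcut G (B \ A) Bᶜ := gcut_union_left_le G _ _ _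
    _ ≤ gcut G A Aᶜ + gvol G (B \ A) :=
      add_le_add (gcut_mono_right G A (compl_subset_compl.2 hAB)) (gcut_le_gvol G _ _)

theorem gcut_compl_le_mul_gvol_univ {φ : ℝ} {A B : Finset V} (hAB : A ⊆ B)
    (hbA : (gcut G A Aᶜ : ℝ) ≤ φ * gvol G Aᶜ)
    (hvolB : (gvol G B : ℝ) ≤ (1 + φ) * gvol G A) :
    (gcut G B Bᶜ : ℝ) ≤ φ * gvol G univ := by
  have hcut : (gcut G B Bᶜ : ℝ) ≤ gcut G A Aᶜ + gvol G (B \ A) := by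
    exact_mod_cast gcut_compl_le_of_subset G hAB
  have hdiff : (gvol G (B \ A) : ℝ) + gvol G A = gvol G B := by
    exact_mod_cast gvol_sdiff_add_gvol G hAB
  have hA : (gvol G A : ℝ) + gvol G Aᶜ = gvol G univ := by
    exact_mod_cast gvol_add_gvol_compl G A
  rw [← hA, mul_add]
  linarith

end

/-- Let `G` be a finite simple graph, `0 < φ ≤ 1/12`, and `A ⊆ B` vertex sets
with `|∂A| ≤ φ·Vol(V∖A)`, `Vol(B) ≤ (1+φ)·Vol(A)`, `Vol(A) ≤ (5/6)·Vol(V)`, and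
`Vol(B) > Vol(V)/2`. Then `|∂B| ≤ 12φ·Vol(V∖B)`; in particular, if `B ≠ V` then the
conductance `Φ(B) = |∂B| / min(Vol B, Vol Bᶜ)` satisfies `Φ(B) ≤ 12φ`. -/
theorem boundary_of_slightly_larger_set_large_side
    {V : Type*} [Fintype V] [DecidableEq V] (G : SimpleGraph V) [DecidableRel G.Adj]
    (φ : ℝ) (hφ : 0 < φ) (hφ' : φ ≤ 1 / 12) (A B : Finset V) (hAB : A ⊆ B)
    (hbA : (gcut G A Aᶜ : ℝ) ≤ φ * gvol G Aᶜ)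
    (hvolB : (gvol G B : ℝ) ≤ (1 + φ) * gvol G A)
    (hvolA : (gvol G A : ℝ) ≤ (5 / 6) * gvol G Finset.univ)
    (hhalf : (gvol G Finset.univ : ℝ) / 2 < (gvol G B : ℝ)) :
    (gcut G B Bᶜ : ℝ) ≤ 12 * φ * gvol G Bᶜ ∧
    (B ≠ Finset.univ →
      (gcut G B Bᶜ : ℝ) / min (gvol G B : ℝ) (gvol G Bᶜ : ℝ) ≤ 12 * φ) := by
  have hB : (gvol G B : ℝ) + gvol G Bᶜ = gvol G univ := by
    exact_mod_cast gvol_add_gvol_compl G B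
  have hvolB' : (gvol G B : ℝ) ≤ 13 / 12 * gvol G A :=
    hvolB.trans (by gcongr; linarith)
  have hcompl : (gvol G univ : ℝ) ≤ 12 * gvol G Bᶜ := by linarith
  have hcut : (gcut G B Bᶜ : ℝ) ≤ 12 * φ * gvol G Bᶜ :=
    calc (gcut G B Bᶜ : ℝ) ≤ φ * gvol G univ :=
          gcut_compl_le_mul_gvol_univ G hAB hbA hvolB
      _ ≤ φ * (12 * gvol G Bᶜ) := mul_le_mul_of_nonneg_left hcompl hφ.le
      _ = 12 * φ * gvol G Bᶜ := by ring
  refine ⟨hcut, fun _ => ?_⟩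
  rw [min_eq_right (by linarith)]
  exact div_le_of_le_mul₀ (by positivity) (by positivity) (by linarith)
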